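/- Fix real τ with 0 ≤ τ ≤ 1/4 and let x be a feasible ATSPP LP solution with layers L_i as defined from the τ-narrow cut chain. Then x(∂⁺(L_i)) + x(∂⁻(L_i)) < 2 + 4τ for every 1 < i < k+1. -/
import Mathlib


open Finset

variable {V : Type*} [Fintype V] [DecidableEq V]

/-- Total `x`-weight of arcs from `A` to `B`. -/
def flowBtw (x : V → V → ℝ) (A B : Finset V) : ℝ := ∑ u ∈ A, ∑ v ∈ B, x u v

/-- `x(∂⁺(U))`: weight of arcs leaving `U`. -/
def cutOut (x : V → V → ℝ) (U : Finset V) : ℝ := flowBtw x U Uᶜ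

/-- `x(∂⁻(U))`: weight of arcs entering `U`. -/
def cutIn (x : V → V → ℝ) (U : Finset V) : ℝ := flowBtw x Uᶜ U

/-- Feasibility for the ATSPP subtour elimination LP on the complete digraph on `V`. -/
structure FeasLP (s t : V) (x : V → V → ℝ) : Prop where
  nonneg : ∀ u v, 0 ≤ x u v
  diag : ∀ v, x v v = 0
  outS : ∑ v, x s v = 1
  inS : ∑ v, x v s = 0
  inT : ∑ v, x v t = 1
  outT : ∑ v, x t v = 0
  outDeg : ∀ v, v ≠ s → v ≠ t → ∑ w, x v w = 1
  inDeg : ∀ v, v ≠ s → v ≠ t → ∑ w, x w v = 1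
  cut : ∀ U : Finset V, s ∈ U → U ≠ Finset.univ → 1 ≤ cutOut x U

/-- A `τ`-narrow `s`-`t` cut: `s ∈ U`, `t ∉ U`, and `x(∂⁺(U)) < 1 + τ`. -/
def NarrowCut (s t : V) (x : V → V → ℝ) (τ : ℝ) (U : Finset V) : Prop :=
  s ∈ U ∧ t ∉ U ∧ cutOut x U < 1 + τ


lemma flowBtw_mono (x : V → V → ℝ) (hx : ∀ u v, 0 ≤ x u v) {A A' B B' : Finset V}
    (hA : A ⊆ A') (hB : B ⊆ B') : flowBtw x A B ≤ flowBtw x A' B' := by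
  unfold flowBtw
  calc ∑ u ∈ A, ∑ v ∈ B, x u v ≤ ∑ u ∈ A, ∑ v ∈ B', x u v := by
        apply Finset.sum_le_sum
        intro u _
        exact Finset.sum_le_sum_of_subset_of_nonneg hB (fun v _ _ => hx u v)
    _ ≤ ∑ u ∈ A', ∑ v ∈ B', x u v := by
        apply Finset.sum_le_sum_of_subset_of_nonneg hA
        intro u _ _
        exact Finset.sum_nonneg (fun v _ => hx u v)

lemma flowBtw_union_right (x : V → V → ℝ) (A B C : Finset V) (h : Disjoint B C) :
    flowBtw x A (B ∪ C) = flowBtw x A B + flowBtw x A C := by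
  unfold flowBtw
  rw [← Finset.sum_add_distrib]
  exact Finset.sum_congr rfl (fun u _ => Finset.sum_union h)

lemma cut_diff (x : V → V → ℝ) (U : Finset V) :
    cutOut x U - cutIn x U = ∑ u ∈ U, ((∑ v, x u v) - (∑ v, x v u)) := by
  unfold cutOut cutIn flowBtw
  have h1 : ∀ u, ∑ v ∈ Uᶜ, x u v = (∑ v, x u v) - ∑ v ∈ U, x u v := by
    intro u
    have := Finset.sum_compl_add_sum U (fun v => x u v)
    linarith
  have h2 : ∑ u ∈ Uᶜ, ∑ v ∈ U, x u v = ∑ v ∈ U, ((∑ u, x u v) - ∑ u ∈ U, x u v) := by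
    rw [Finset.sum_comm]
    apply Finset.sum_congr rfl
    intro v _
    have := Finset.sum_compl_add_sum U (fun u => x u v)
    linarith
  rw [h2]
  rw [Finset.sum_congr rfl (fun u _ => h1 u), Finset.sum_sub_distrib,
    Finset.sum_sub_distrib, Finset.sum_sub_distrib]
  have : ∑ u ∈ U, ∑ v ∈ U, x u v = ∑ v ∈ U, ∑ u ∈ U, x u v := Finset.sum_comm
  linarith

/-- For a narrow cut (or any `s`-`t` cut), `cutOut - cutIn = 1`. -/
lemma cut_balance (s t : V) (hst : s ≠ t) (x : V → V → ℝ) (hx : FeasLP s t x)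
    (U : Finset V) (hs : s ∈ U) (ht : t ∉ U) : cutOut x U - cutIn x U = 1 := by
  rw [cut_diff]
  rw [Finset.sum_eq_single s]
  · rw [hx.outS, hx.inS]; ring
  · intro u hu hus
    have hut : u ≠ t := fun h => ht (h ▸ hu)
    rw [hx.outDeg u hus hut, hx.inDeg u hus hut]; ring
  · intro h; exact absurd hs h

theorem stmt15 (s t : V) (hst : s ≠ t) (x : V → V → ℝ) (hx : FeasLP s t x)
    (τ : ℝ) (hτ0 : 0 ≤ τ) (hτ : τ ≤ 1/4)
    (k : ℕ) (hk : 2 ≤ k) (Uc L : ℕ → Finset V)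
    (hU1 : Uc 1 = {s}) (hUk : Uc k = Finset.univ \ {t})
    (hmono : ∀ i j, 1 ≤ i → i < j → j ≤ k → Uc i ⊂ Uc j)
    (hnarrow : ∀ i, 1 ≤ i → i ≤ k → NarrowCut s t x τ (Uc i))
    (hall : ∀ W : Finset V, NarrowCut s t x τ W → ∃ i, 1 ≤ i ∧ i ≤ k ∧ W = Uc i)
    (hL1 : L 1 = {s}) (hLtop : L (k+1) = {t})
    (hL : ∀ i, 1 < i → i ≤ k → L i = Uc i \ Uc (i-1)) :
    ∀ i, 1 < i → i ≤ k → cutOut x (L i) + cutIn x (L i) < 2 + 4*τ := by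
  intro i hi1 hik
  have hi1' : 1 ≤ i - 1 := by omega
  have hik' : i - 1 ≤ k := by omega
  set U := Uc i with hUdef
  set W := Uc (i-1) with hWdef
  have hWU : W ⊆ U := (hmono (i-1) i hi1' (by omega) hik).subset
  obtain ⟨hsU, htU, hcoU⟩ := hnarrow i (by omega) hik
  obtain ⟨hsW, htW, hcoW⟩ := hnarrow (i-1) hi1' hik'
  have hbU : cutOut x U - cutIn x U = 1 := cut_balance s t hst x hx U hsU htU
  have hbW : cutOut x W - cutIn x W = 1 := cut_balance s t hst x hx W hsW htW
  have hLi : L i = U \ W := hL i hi1 hik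
  have hcompl : (U \ W)ᶜ = Uᶜ ∪ W := by
    ext v; simp [Finset.mem_sdiff]; tauto
  have hdisj : Disjoint (Uᶜ : Finset V) W := by
    exact Finset.disjoint_left.mpr (fun v hv hvW => (Finset.mem_compl.mp hv) (hWU hvW))
  have hLU : U \ W ⊆ U := Finset.sdiff_subset
  have hLWc : U \ W ⊆ Wᶜ := by
    intro v hv
    simp [Finset.mem_sdiff] at hv ⊢
    exact hv.2
  have hout : cutOut x (L i) ≤ cutOut x U + cutIn x W := by
    rw [hLi]
    unfold cutOut
    rw [show flowBtw x (U \ W) (U \ W)ᶜ = flowBtw x (U \ W) (Uᶜ ∪ W) by rw [hcompl],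
      flowBtw_union_right x _ _ _ hdisj]
    have h1 : flowBtw x (U \ W) Uᶜ ≤ flowBtw x U Uᶜ :=
      flowBtw_mono x hx.nonneg hLU (subset_refl _)
    have h2 : flowBtw x (U \ W) W ≤ flowBtw x Wᶜ W :=
      flowBtw_mono x hx.nonneg hLWc (subset_refl _)
    unfold cutIn
    linarith
  have hin : cutIn x (L i) ≤ cutIn x U + cutOut x W := by
    rw [hLi]
    unfold cutIn
    rw [show flowBtw x (U \ W)ᶜ (U \ W) = flowBtw x (Uᶜ ∪ W) (U \ W) by rw [hcompl]]
    have hsplit : flowBtw x (Uᶜ ∪ W) (U \ W)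
        = flowBtw x Uᶜ (U \ W) + flowBtw x W (U \ W) := by
      unfold flowBtw
      exact Finset.sum_union hdisj
    rw [hsplit]
    have h1 : flowBtw x Uᶜ (U \ W) ≤ flowBtw x Uᶜ U :=
      flowBtw_mono x hx.nonneg (subset_refl _) hLU
    have h2 : flowBtw x W (U \ W) ≤ flowBtw x W Wᶜ :=
      flowBtw_mono x hx.nonneg (subset_refl _) hLWc
    unfold cutOut
    linarith
  have hcU : 1 ≤ cutOut x U := by
    apply hx.cut U hsU
    intro h
    exact htU (by rw [hUdef] at h; rw [h]; exact Finset.mem_univ t)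
  linarith
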